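/- arXiv:2509.11331 — 2 statements merged into one kernel-verified Lean document; each statement's English description precedes it below -/
import Mathlib

section
/- Let G = (V, E) be a quasi-acyclic 2-path-bounded oriented graph without loops, multiple edges and triangles. Then ν(G) ≥ 𝔯𝔥(G). -/
/-- An oriented graph: finite nonempty sets of vertices and edges with
origin and tail maps. -/
structure OrientedGraph where
  V : Type
  E : Type
  [fintypeV : Fintype V]
  [fintypeE : Fintype E]
  [nonemptyV : Nonempty V]
  [nonemptyE : Nonempty E]
  o : E → V
  t : E → V

attribute [instance] OrientedGraph.fintypeV OrientedGraph.fintypeE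
  OrientedGraph.nonemptyV OrientedGraph.nonemptyE

namespace OrientedGraph

variable (G : OrientedGraph)

/-- `G.IsPath p u v` : the edge sequence `p` is a path from `u` to `v`
(consecutive edges are composable; paths of length 0 at any vertex are allowed). -/
def IsPath (p : List G.E) (u v : G.V) : Prop :=
  List.Chain' (fun e f => G.t e = G.o f) p ∧
  ((p = [] ∧ u = v) ∨
    ∃ h : p ≠ [], u = G.o (p.head h) ∧ v = G.t (p.getLast h))

/-- The label of an edge sequence: the product of the labels of its edges
(the empty sequence maps to `1`). -/
def labelProd {M : Type} [Monoid M] (l : G.E → M) (s : List G.E) : M :=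
  (s.map l).prod

/-- The diagram `(G, l)` is commutative: any two paths with the same origin and
the same tail have equal labels. -/
def IsCommutative {M : Type} [Monoid M] (l : G.E → M) : Prop :=
  ∀ (u v : G.V) (p₁ p₂ : List G.E),
    G.IsPath p₁ u v → G.IsPath p₂ u v → G.labelProd l p₁ = G.labelProd l p₂

/-- A complete system of relations for `G`: for every monoid `M` and every
labeling `l : E → M`, the diagram `(G, l)` is commutative iff all relations hold. -/
def IsComplete (R : Finset (List G.E × List G.E)) : Prop :=
  ∀ (M : Type) [Monoid M], ∀ l : G.E → M,
    G.IsCommutative l ↔ ∀ r ∈ R, G.labelProd l r.1 = G.labelProd l r.2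

/-- A minimal complete system of relations: no proper subset is complete. -/
def IsMinimalComplete (R : Finset (List G.E × List G.E)) : Prop :=
  G.IsComplete R ∧ ∀ R' : Finset (List G.E × List G.E), R' ⊂ R → ¬ G.IsComplete R'

/-- The commutativity rank `η(G)`: the minimal cardinality of a complete
system of relations for `G`. -/
noncomputable def eta : ℕ :=
  sInf {n : ℕ | ∃ R : Finset (List G.E × List G.E), G.IsComplete R ∧ R.card = n}

/-- `S'` is obtained from `S` by one multiplication. -/
def MulStep (S S' : Set (List G.E)) : Prop :=
  ∃ s ∈ S, ∃ s' ∈ S, S' = S ∪ {s ++ s'}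

/-- `G.mCost S S'` : the minimal number of multiplications needed to obtain `S'`
from `S` (`⊤` if impossible). -/
noncomputable def mCost (S S' : Set (List G.E)) : ℕ∞ :=
  sInf {k : ℕ∞ | ∃ n : ℕ, k = n ∧ ∃ f : ℕ → Set (List G.E),
    f 0 = S ∧ f n = S' ∧ ∀ i < n, G.MulStep (f i) (f (i + 1))}

/-- `S_R`: the set of all edge sequences appearing in the relations of `R`. -/
def relSet (R : Finset (List G.E × List G.E)) : Set (List G.E) :=
  {s | ∃ r ∈ R, s = r.1 ∨ s = r.2}

/-- `ℰ`: the empty sequence together with all one-edge sequences. -/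
def baseSet : Set (List G.E) :=
  {s | s = [] ∨ ∃ e : G.E, s = [e]}

/-- `m(R)`: the minimal number of multiplications needed to build all sequences
appearing in `R`, starting from `ℰ`. -/
noncomputable def mRel (R : Finset (List G.E × List G.E)) : ℕ∞ :=
  sInf {k : ℕ∞ | ∃ S : Set (List G.E), G.relSet R ⊆ S ∧ k = G.mCost G.baseSet S}

/-- The multiplication rank `ν(G)`. -/
noncomputable def nu : ℕ∞ :=
  sInf {k : ℕ∞ | ∃ R : Finset (List G.E × List G.E), G.IsComplete R ∧ k = G.mRel R}

/-- A 4-tuple of edges `(a, b, c, d)` forms a rhomboid. -/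
def IsRhomboid (r : G.E × G.E × G.E × G.E) : Prop :=
  G.o r.1 = G.o r.2.2.1 ∧ G.t r.2.1 = G.t r.2.2.2 ∧
  G.t r.1 = G.o r.2.1 ∧ G.t r.2.2.1 = G.o r.2.2.2 ∧
  G.o r.1 ≠ G.t r.1 ∧ G.o r.1 ≠ G.o r.2.2.2 ∧ G.o r.1 ≠ G.t r.2.2.2 ∧
  G.t r.1 ≠ G.o r.2.2.2 ∧ G.t r.1 ≠ G.t r.2.2.2 ∧ G.o r.2.2.2 ≠ G.t r.2.2.2

/-- Two rhomboids `(a, b, c, d)` and `(a', b', c', d')` are disjoint. -/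
def RhDisjoint (r r' : G.E × G.E × G.E × G.E) : Prop :=
  (r.1 ≠ r'.1 ∨ r.2.1 ≠ r'.2.1) ∧
  (r.1 ≠ r'.2.2.1 ∨ r.2.1 ≠ r'.2.2.2) ∧
  (r.2.2.1 ≠ r'.2.2.1 ∨ r.2.2.2 ≠ r'.2.2.2) ∧
  (r.2.2.1 ≠ r'.1 ∨ r.2.2.2 ≠ r'.2.1)

/-- `𝔯𝔥(G)`: the maximal cardinality of a family of pairwise disjoint rhomboids in `G`. -/
noncomputable def rhNum : ℕ :=
  sSup {n : ℕ | ∃ F : Finset (G.E × G.E × G.E × G.E),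
    (∀ r ∈ F, G.IsRhomboid r) ∧
    (∀ r ∈ F, ∀ r' ∈ F, r ≠ r' → G.RhDisjoint r r') ∧ F.card = n}

/-- `𝔏(G)`: the number of loops of `G`. -/
noncomputable def loopCount : ℕ :=
  Nat.card {e : G.E // G.o e = G.t e}

/-- `G` is quasi-acyclic: no directed cycle visiting two or more distinct vertices. -/
def QuasiAcyclic : Prop :=
  ∀ u v : G.V, u ≠ v →
    ∀ p q : List G.E, G.IsPath p u v → G.IsPath q v u → False

/-- `G` is 2-path-bounded: every oriented path avoiding loop edges has length at most 2. -/
def TwoPathBounded : Prop :=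
  ∀ (p : List G.E) (u v : G.V), G.IsPath p u v →
    (∀ e ∈ p, G.o e ≠ G.t e) → p.length ≤ 2

/-- `G` has a pair of multiple edges. -/
def HasMultipleEdges : Prop :=
  ∃ e e' : G.E, e ≠ e' ∧ G.t e = G.t e' ∧ G.o e = G.o e' ∧ G.t e ≠ G.o e

/-- `G` has a triangle. -/
def HasTriangle : Prop :=
  ∃ a b c : G.E, G.o a = G.o b ∧ G.t b = G.o c ∧ G.t c = G.t a ∧
    G.o a ≠ G.t a ∧ G.o b ≠ G.t b ∧ G.o c ≠ G.t c

/-- `G` has no loops. -/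
def NoLoops : Prop := ∀ e : G.E, G.o e ≠ G.t e

/-- Every edge occurring on either side of the relation `r` is a loop. -/
def AllLoops (r : List G.E × List G.E) : Prop :=
  (∀ e ∈ r.1, G.o e = G.t e) ∧ (∀ e ∈ r.2, G.o e = G.t e)

/-- Both sides of the relation `r` contain at least one non-loop edge. -/
def BothSidesNonLoop (r : List G.E × List G.E) : Prop :=
  (∃ e ∈ r.1, G.o e ≠ G.t e) ∧ (∃ e ∈ r.2, G.o e ≠ G.t e)

end OrientedGraph

/-- The triploid `T(n₁, n₂, n₃, n₀, e)`. -/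
def Triploid (n₁ n₂ n₃ n₀ e : ℕ) (hn₁ : 0 < n₁) (he : n₂ * (n₁ + n₃) ≤ e)
    (he₀ : 0 < e) : OrientedGraph where
  V := Fin n₀ ⊕ Fin n₁ ⊕ Fin n₂ ⊕ Fin n₃
  E := (Fin n₁ × Fin n₂) ⊕ (Fin n₂ × Fin n₃) ⊕ Fin (e - n₂ * (n₁ + n₃))
  nonemptyV := ⟨Sum.inr (Sum.inl ⟨0, hn₁⟩)⟩
  nonemptyE := by
    by_cases h : n₂ * (n₁ + n₃) < e
    · exact ⟨Sum.inr (Sum.inr ⟨0, by omega⟩)⟩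
    · have h2 : 0 < n₂ := by
        rcases Nat.eq_zero_or_pos n₂ with h0 | h0
        · exfalso; subst h0; simp at h; omega
        · exact h0
      exact ⟨Sum.inl (⟨0, hn₁⟩, ⟨0, h2⟩)⟩
  o := Sum.elim (fun p => Sum.inr (Sum.inl p.1))
        (Sum.elim (fun p => Sum.inr (Sum.inr (Sum.inl p.1)))
          (fun _ => Sum.inr (Sum.inl ⟨0, hn₁⟩)))
  t := Sum.elim (fun p => Sum.inr (Sum.inr (Sum.inl p.2)))
        (Sum.elim (fun p => Sum.inr (Sum.inr (Sum.inr p.2)))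
          (fun _ => Sum.inr (Sum.inl ⟨0, hn₁⟩)))

/-!
Label the edges in the monoid `WithOne (WordSummary w)`: a nonempty word of edges is summarised by
its first and last edge, each masked to `none` unless it can be preceded, resp. followed, and by
the total `w`-weight of its adjacent pairs. For `w = 0` this labelling is
commutative: two parallel paths are either equal or the two sides `ab`, `cd` of a rhomboid, and
both sides are summarised by `(none, none, 0)`. So every relation of a complete system `R` holds
for it. If no sequence of `R` contains `ab` as adjacent edges, the relations also hold when `w`
counts the occurrences of `ab`, so that labelling would be commutative too, yet it weighs `ab` by
`1` and `cd` by `0`. Hence the top pairs of rhomboids all occur adjacently in `S_R`; a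
multiplication creates at most one new adjacent pair, and disjoint rhomboids have distinct top
pairs.
-/

namespace List

variable {α : Type*}

def adjPairs : List α → List (α × α)
  | [] => []
  | [_] => []
  | a :: b :: l => (a, b) :: adjPairs (b :: l)

@[simp] lemma adjPairs_nil : adjPairs ([] : List α) = [] := rfl

@[simp] lemma adjPairs_singleton (a : α) : adjPairs [a] = [] := rfl

@[simp] lemma adjPairs_cons_cons (a b : α) (l : List α) :
    adjPairs (a :: b :: l) = (a, b) :: adjPairs (b :: l) := rfl

lemma adjPairs_append : ∀ s t : List α,
    adjPairs (s ++ t) = adjPairs s ++ (Option.map₂ Prod.mk s.getLast? t.head?).toList ++ adjPairs t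
  | [], t => by simp
  | [a], [] => by simp
  | [a], b :: t => by simp
  | a :: b :: s, t => by
    change adjPairs (a :: b :: (s ++ t)) = _
    rw [adjPairs_cons_cons, ← cons_append, adjPairs_append (b :: s) t]
    simp

end List

@[ext]
structure WordSummary {α : Type*} (w : α → α → ℤ) where
  first : α
  last : α
  count : ℤ

namespace WordSummary

variable {α β : Type*} {w : α → α → ℤ}

instance : Mul (WordSummary w) :=
  ⟨fun x y => ⟨x.first, y.last, x.count + y.count + w x.last y.first⟩⟩

@[simp] lemma mul_first (x y : WordSummary w) : (x * y).first = x.first := rfl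

@[simp] lemma mul_last (x y : WordSummary w) : (x * y).last = y.last := rfl

@[simp] lemma mul_count (x y : WordSummary w) :
    (x * y).count = x.count + y.count + w x.last y.first := rfl

instance : Semigroup (WordSummary w) where
  mul_assoc x y z := by
    ext <;> simp only [mul_first, mul_last, mul_count]
    ring

variable (w) (κ τ : β → α)

def of (b : β) : WithOne (WordSummary w) := ((⟨κ b, τ b, 0⟩ : WordSummary w) : WithOne _)

def weight (s : List β) : ℤ := (s.adjPairs.map fun p => w (τ p.1) (κ p.2)).sum

lemma prod_map_of_cons (b : β) (s : List β) :
    ((b :: s).map (of w κ τ)).prod =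
      ((⟨κ b, τ ((b :: s).getLast (List.cons_ne_nil b s)), weight w κ τ (b :: s)⟩ :
        WordSummary w) : WithOne _) := by
  induction s generalizing b with
  | nil => simp [of, weight]
  | cons c s ih =>
    rw [List.map_cons, List.prod_cons, ih, of, ← WithOne.coe_mul, WithOne.coe_inj]
    ext
    · rfl
    · simp
    · simp only [weight, mul_count, zero_add, List.adjPairs_cons_cons, List.map_cons, List.sum_cons]
      ring

lemma prod_map_of_eq_of_weight_eq {w' : α → α → ℤ} {s s' : List β}
    (h : (s.map (of w' κ τ)).prod = (s'.map (of w' κ τ)).prod)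
    (hw : weight w κ τ s = weight w κ τ s') :
    (s.map (of w κ τ)).prod = (s'.map (of w κ τ)).prod := by
  cases s with
  | nil => cases s' with
    | nil => rfl
    | cons b' s' => exact absurd h.symm (by rw [prod_map_of_cons]; exact WithOne.coe_ne_one)
  | cons b s => cases s' with
    | nil => exact absurd h (by rw [prod_map_of_cons]; exact WithOne.coe_ne_one)
    | cons b' s' =>
      simp only [prod_map_of_cons, WithOne.coe_inj, WordSummary.ext_iff] at h ⊢
      exact ⟨h.1, h.2.1, hw⟩

end WordSummary

namespace OrientedGraph

variable {G : OrientedGraph} {p q : List G.E} {a b c d e f : G.E} {u v : G.V}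

lemma isPath_iff : G.IsPath p u v ↔ p.IsChain (fun e f => G.t e = G.o f) ∧
    ((p = [] ∧ u = v) ∨ ∃ h : p ≠ [], u = G.o (p.head h) ∧ v = G.t (p.getLast h)) :=
  Iff.rfl

@[simp] lemma isPath_nil_iff : G.IsPath [] u v ↔ u = v := by
  simp [isPath_iff]

lemma isPath_cons_iff : G.IsPath (e :: p) u v ↔ u = G.o e ∧ G.IsPath p (G.t e) v := by
  cases p with
  | nil => simp [isPath_iff, eq_comm]
  | cons f p =>
    simp only [isPath_iff, List.isChain_cons_cons, reduceCtorEq, false_and, List.head_cons, ne_eq,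
      not_false_eq_true, List.getLast_cons, exists_const, false_or]
    tauto

lemma isPath_singleton_iff : G.IsPath [e] u v ↔ u = G.o e ∧ v = G.t e := by
  simp [isPath_cons_iff, eq_comm]

lemma isPath_pair_iff : G.IsPath [e, f] u v ↔ u = G.o e ∧ G.t e = G.o f ∧ v = G.t f := by
  simp [isPath_cons_iff, eq_comm]

def HasPred (e : G.E) : Prop := ∃ f, G.t f = G.o e

def HasSucc (e : G.E) : Prop := ∃ f, G.t e = G.o f

lemma ne_of_isPath_cons (hnl : G.NoLoops) (hqa : G.QuasiAcyclic) (hp : G.IsPath (e :: p) u v) :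
    u ≠ v := by
  rintro rfl
  obtain ⟨rfl, hp⟩ := isPath_cons_iff.1 hp
  exact hqa _ _ (hnl e) [e] p (isPath_singleton_iff.2 ⟨rfl, rfl⟩) hp

lemma not_hasPred_of_hasSucc (hnl : G.NoLoops) (hpb : G.TwoPathBounded) (he : G.HasSucc e) :
    ¬ G.HasPred e := by
  obtain ⟨g, hg⟩ := he
  rintro ⟨f, hf⟩
  have := hpb [f, e, g] (G.o f) (G.t g) (by simp [isPath_cons_iff, hf, hg]) fun x _ => hnl x
  simp at this

lemma eq_of_parallel (hnl : G.NoLoops) (hme : ¬ G.HasMultipleEdges) (ho : G.o e = G.o f)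
    (ht : G.t e = G.t f) : e = f := by
  by_contra hef
  exact hme ⟨e, f, hef, ht, ho, fun h => hnl e h.symm⟩

theorem eq_or_isRhomboid_of_isPath (hnl : G.NoLoops) (hqa : G.QuasiAcyclic)
    (hpb : G.TwoPathBounded) (hme : ¬ G.HasMultipleEdges) (htr : ¬ G.HasTriangle)
    (hp : G.IsPath p u v) (hq : G.IsPath q u v) :
    p = q ∨ ∃ a b c d, G.IsRhomboid (a, b, c, d) ∧ p = [a, b] ∧ q = [c, d] := by
  have hp₂ := hpb p u v hp fun e _ => hnl e
  have hq₂ := hpb q u v hq fun e _ => hnl e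
  rcases p with _ | ⟨e, _ | ⟨f, _ | ⟨_, _⟩⟩⟩ <;> rcases q with _ | ⟨g, _ | ⟨h, _ | ⟨_, _⟩⟩⟩ <;>
    simp only [List.length_cons, List.length_nil] at hp₂ hq₂ <;> try omega
  · exact .inl rfl
  · exact absurd (isPath_nil_iff.1 hp) (ne_of_isPath_cons hnl hqa hq)
  · exact absurd (isPath_nil_iff.1 hp) (ne_of_isPath_cons hnl hqa hq)
  · exact absurd (isPath_nil_iff.1 hq) (ne_of_isPath_cons hnl hqa hp)
  · obtain ⟨rfl, rfl⟩ := isPath_singleton_iff.1 hp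
    obtain ⟨ho, ht⟩ := isPath_singleton_iff.1 hq
    exact .inl (by rw [eq_of_parallel hnl hme ho ht])
  · obtain ⟨rfl, rfl⟩ := isPath_singleton_iff.1 hp
    obtain ⟨ho, hgh, ht⟩ := isPath_pair_iff.1 hq
    exact absurd ⟨e, g, h, ho, hgh, ht.symm, hnl e, hnl g, hnl h⟩ htr
  · exact absurd (isPath_nil_iff.1 hq) (ne_of_isPath_cons hnl hqa hp)
  · obtain ⟨rfl, rfl⟩ := isPath_singleton_iff.1 hq
    obtain ⟨ho, hef, ht⟩ := isPath_pair_iff.1 hp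
    exact absurd ⟨g, e, f, ho, hef, ht.symm, hnl g, hnl e, hnl f⟩ htr
  · have huv := ne_of_isPath_cons hnl hqa hp
    obtain ⟨rfl, hef, rfl⟩ := isPath_pair_iff.1 hp
    obtain ⟨ho, hgh, ht⟩ := isPath_pair_iff.1 hq
    by_cases heg : e = g
    · subst heg
      exact .inl (by rw [eq_of_parallel hnl hme (hef.symm.trans hgh) ht])
    · have hte : G.t e ≠ G.t g := fun h' => heg (eq_of_parallel hnl hme ho h')
      refine .inr ⟨e, f, g, h, ⟨ho, ht, hef, hgh, hnl e, ?_, ?_, ?_, ?_, hnl h⟩, rfl, rfl⟩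
      · exact fun h' => hnl g (by rw [← ho, h', hgh])
      · exact fun h' => huv (by rw [h', ht])
      · exact fun h' => hte (by rw [h', hgh])
      · exact fun h' => htr ⟨e, g, h, ho, hgh, h'.symm, hnl e, hnl g, hnl h⟩

open Classical in
noncomputable def predMask (G : OrientedGraph) (e : G.E) : Option G.E :=
  if G.HasPred e then some e else none

open Classical in
noncomputable def succMask (G : OrientedGraph) (e : G.E) : Option G.E :=
  if G.HasSucc e then some e else none

lemma eq_of_predMask_eq_some (h : G.predMask e = some f) : e = f := by
  unfold predMask at h
  split_ifs at h
  exact Option.some_inj.1 h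

lemma eq_of_succMask_eq_some (h : G.succMask e = some f) : e = f := by
  unfold succMask at h
  split_ifs at h
  exact Option.some_inj.1 h

lemma labelProd_summary_pair (hnl : G.NoLoops) (hpb : G.TwoPathBounded) (w : Option G.E → Option G.E → ℤ)
    (hab : G.t a = G.o b) :
    G.labelProd (WordSummary.of w G.predMask G.succMask) [a, b] =
      ((⟨none, none, w (some a) (some b)⟩ : WordSummary w) : WithOne _) := by
  have ha : G.HasSucc a := ⟨b, hab⟩
  have hb : G.HasPred b := ⟨a, hab⟩
  have hb' : ¬ G.HasSucc b := fun h => not_hasPred_of_hasSucc hnl hpb h hb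
  rw [labelProd, WordSummary.prod_map_of_cons]
  simp [WordSummary.weight, predMask, succMask, ha, hb, hb', not_hasPred_of_hasSucc hnl hpb ha]

theorem isCommutative_summary_zero (hnl : G.NoLoops) (hqa : G.QuasiAcyclic)
    (hpb : G.TwoPathBounded) (hme : ¬ G.HasMultipleEdges) (htr : ¬ G.HasTriangle) :
    G.IsCommutative (WordSummary.of 0 G.predMask G.succMask) := by
  intro u v p q hp hq
  obtain rfl | ⟨a, b, c, d, hr, rfl, rfl⟩ := eq_or_isRhomboid_of_isPath hnl hqa hpb hme htr hp hq
  · rfl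
  · rw [labelProd_summary_pair hnl hpb _ hr.2.2.1, labelProd_summary_pair hnl hpb _ hr.2.2.2.1]
    rfl

theorem exists_mem_relSet_mem_adjPairs (hnl : G.NoLoops) (hqa : G.QuasiAcyclic)
    (hpb : G.TwoPathBounded) (hme : ¬ G.HasMultipleEdges) (htr : ¬ G.HasTriangle)
    {R : Finset (List G.E × List G.E)} (hR : G.IsComplete R) (hr : G.IsRhomboid (a, b, c, d)) :
    ∃ s ∈ G.relSet R, (a, b) ∈ s.adjPairs := by
  classical
  by_contra! hab
  let w : Option G.E → Option G.E → ℤ := fun x y => if x = some a ∧ y = some b then 1 else 0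
  have hweight : ∀ s ∈ G.relSet R, WordSummary.weight w G.predMask G.succMask s = 0 := by
    refine fun s hs => List.sum_eq_zero fun z hz => ?_
    obtain ⟨x, hx, rfl⟩ := List.mem_map.1 hz
    refine if_neg fun ⟨h₁, h₂⟩ => hab s hs ?_
    rwa [← eq_of_succMask_eq_some h₁, ← eq_of_predMask_eq_some h₂]
  have hcomm : G.IsCommutative (WordSummary.of w G.predMask G.succMask) :=
    (hR _ _).2 fun r hr => WordSummary.prod_map_of_eq_of_weight_eq _ _ _
      ((hR _ _).1 (isCommutative_summary_zero hnl hqa hpb hme htr) r hr)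
      (by rw [hweight _ ⟨r, hr, .inl rfl⟩, hweight _ ⟨r, hr, .inr rfl⟩])
  obtain ⟨hac, hbd, hab', hcd, -, -, -, hta, -, -⟩ := hr
  have hne : c ≠ a := fun h => hta (by rw [← h, hcd])
  have := hcomm _ _ [a, b] [c, d] (isPath_pair_iff.2 ⟨rfl, hab', rfl⟩)
    (isPath_pair_iff.2 ⟨hac, hcd, hbd⟩)
  rw [labelProd_summary_pair hnl hpb w hab', labelProd_summary_pair hnl hpb w hcd] at this
  simp [w, hne] at this

lemma exists_finset_adjPairs_of_mulStep_chain {f : ℕ → Set (List G.E)} (hf₀ : f 0 = G.baseSet)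
    (n : ℕ) (hf : ∀ i < n, G.MulStep (f i) (f (i + 1))) :
    ∃ Q : Finset (G.E × G.E), Q.card ≤ n ∧ ∀ s ∈ f n, ∀ x ∈ s.adjPairs, x ∈ Q := by
  classical
  induction n with
  | zero =>
    refine ⟨∅, le_rfl, ?_⟩
    rintro s hs x hx
    rw [hf₀] at hs
    obtain rfl | ⟨e, rfl⟩ := hs <;> simp at hx
  | succ n ih =>
    obtain ⟨Q, hQn, hQ⟩ := ih fun i hi => hf i (Nat.lt_succ_of_lt hi)
    obtain ⟨s₁, hs₁, s₂, hs₂, hstep⟩ := hf n (Nat.lt_succ_self n)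
    let j := Option.map₂ Prod.mk s₁.getLast? s₂.head?
    refine ⟨Q ∪ j.toFinset, ?_, ?_⟩
    · calc (Q ∪ j.toFinset).card ≤ Q.card + j.toFinset.card := Finset.card_union_le _ _
        _ ≤ n + 1 := by
          gcongr
          rw [Option.card_toFinset]
          cases j <;> simp
    · rintro s hs x hx
      rw [hstep] at hs
      obtain hs | rfl := hs
      · exact Finset.mem_union_left _ (hQ s hs x hx)
      · rw [List.adjPairs_append] at hx
        simp only [List.mem_append, Option.mem_toList] at hx
        rcases hx with (hx | hx) | hx
        · exact Finset.mem_union_left _ (hQ s₁ hs₁ x hx)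
        · exact Finset.mem_union_right _ (Option.mem_toFinset.2 hx)
        · exact Finset.mem_union_left _ (hQ s₂ hs₂ x hx)

theorem card_le_of_mulStep_chain (hnl : G.NoLoops) (hqa : G.QuasiAcyclic)
    (hpb : G.TwoPathBounded) (hme : ¬ G.HasMultipleEdges) (htr : ¬ G.HasTriangle)
    {R : Finset (List G.E × List G.E)} (hR : G.IsComplete R) {f : ℕ → Set (List G.E)} {n : ℕ}
    (hf₀ : f 0 = G.baseSet) (hf : ∀ i < n, G.MulStep (f i) (f (i + 1)))
    (hRf : G.relSet R ⊆ f n) {F : Finset (G.E × G.E × G.E × G.E)}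
    (hF : ∀ r ∈ F, G.IsRhomboid r) (hdisj : ∀ r ∈ F, ∀ r' ∈ F, r ≠ r' → G.RhDisjoint r r') :
    F.card ≤ n := by
  obtain ⟨Q, hQn, hQ⟩ := exists_finset_adjPairs_of_mulStep_chain hf₀ n hf
  refine le_trans (Finset.card_le_card_of_injOn (fun r => (r.1, r.2.1)) ?_ ?_) hQn
  · rintro ⟨a, b, c, d⟩ hr
    obtain ⟨s, hs, hab⟩ := exists_mem_relSet_mem_adjPairs hnl hqa hpb hme htr hR (hF _ hr)
    exact hQ s (hRf hs) _ hab
  · intro r hr r' hr' h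
    by_contra hne
    obtain ⟨h₁, -⟩ := hdisj r hr r' hr' hne
    exact h₁.elim (fun h' => h' (Prod.ext_iff.1 h).1) fun h' => h' (Prod.ext_iff.1 h).2

end OrientedGraph

/-- Theorem: if `G` is quasi-acyclic, 2-path-bounded, without loops, multiple edges
and triangles, then `ν(G) ≥ 𝔯𝔥(G)`. -/
theorem nu_ge_rhNum_of_noLoops (G : OrientedGraph) (hnl : G.NoLoops) (hqa : G.QuasiAcyclic)
    (hpb : G.TwoPathBounded) (hme : ¬ G.HasMultipleEdges) (htr : ¬ G.HasTriangle) :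
    (G.rhNum : ℕ∞) ≤ G.nu := by
  refine le_sInf ?_
  rintro _ ⟨R, hR, rfl⟩
  refine le_sInf ?_
  rintro _ ⟨S, hRS, rfl⟩
  refine le_sInf ?_
  rintro _ ⟨n, rfl, f, hf₀, rfl, hf⟩
  refine Nat.cast_le.2 (csSup_le ⟨0, ∅, by simp, by simp, rfl⟩ ?_)
  rintro _ ⟨F, hF, hdisj, rfl⟩
  exact G.card_le_of_mulStep_chain hnl hqa hpb hme htr hR hf₀ hf hRS hF hdisj
end

section
/- Let G be a quasi-acyclic 2-path-bounded oriented graph without multiple edges and triangles, and let R be any complete system of relations for G. Let R_L ⊆ R be the subset of relations in which every edge occurring on either side is a loop, and let R_N ⊆ R be the subset of relations in which both sides contain at least one non-loop edge. Then R = R_L ⊔ R_N, i.e., every relation of R lies in exactly one of R_L, R_N. -/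
/-!
Label every loop by `0` and every other edge by `1` in `(ℕ, +)`. Filtering the loops out of a
path leaves a loop-free path with the same endpoints; in a quasi-acyclic graph such a path is
empty when it is closed, and otherwise it has one or two edges, and a one-edge and a two-edge
path between the same vertices would form a triangle. So the labeling is commutative, and
completeness forces the two sides of every relation of `R` to contain equally many non-loop edges.
-/

namespace OrientedGraph

open scoped Classical

variable {G : OrientedGraph}

lemma isPath_nil {u v : G.V} : G.IsPath [] u v ↔ u = v := by
  simp [IsPath, List.Chain']

lemma isPath_cons {e : G.E} {p : List G.E} {u v : G.V} :
    G.IsPath (e :: p) u v ↔ G.o e = u ∧ G.IsPath p (G.t e) v := by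
  cases p with
  | nil => simp [IsPath, eq_comm, List.Chain']
  | cons f q =>
    simp only [IsPath, List.Chain', List.isChain_cons_cons, reduceCtorEq, false_and, ne_eq,
      not_false_eq_true, List.head_cons, List.getLast_cons_cons, exists_true_left, false_or]
    constructor
    · rintro ⟨⟨hef, hq⟩, hu, hv⟩
      exact ⟨hu.symm, hq, hef, by simpa [List.getLast_cons] using hv⟩
    · rintro ⟨hu, hq, hf, hv⟩
      exact ⟨⟨hf, hq⟩, hu.symm, by simpa [List.getLast_cons] using hv⟩

variable (G) in
noncomputable def nonLoops (p : List G.E) : List G.E :=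
  p.filter fun e => G.o e ≠ G.t e

lemma IsPath.nonLoops {p : List G.E} {u v : G.V} (hp : G.IsPath p u v) :
    G.IsPath (G.nonLoops p) u v := by
  induction p generalizing u with
  | nil => exact hp
  | cons e q ih =>
    obtain ⟨rfl, hq⟩ := isPath_cons.1 hp
    by_cases he : G.o e = G.t e
    · simpa [OrientedGraph.nonLoops, List.filter_cons, he] using ih hq
    · simpa [OrientedGraph.nonLoops, List.filter_cons, he, isPath_cons] using ih hq

lemma o_ne_t_of_mem_nonLoops {p : List G.E} {e : G.E} (he : e ∈ G.nonLoops p) :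
    G.o e ≠ G.t e := by
  simpa using List.of_mem_filter he

lemma QuasiAcyclic.eq_nil_of_isPath_self (hqa : G.QuasiAcyclic) {p : List G.E} {u : G.V}
    (hp : G.IsPath p u u) (hlf : ∀ e ∈ p, G.o e ≠ G.t e) : p = [] := by
  cases p with
  | nil => rfl
  | cons e q =>
    obtain ⟨rfl, hq⟩ := isPath_cons.1 hp
    exact (hqa _ _ (hlf e List.mem_cons_self) [e] q (by simp [isPath_cons, isPath_nil]) hq).elim

lemma length_eq_of_isPath_of_loopFree (hqa : G.QuasiAcyclic) (hpb : G.TwoPathBounded)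
    (htr : ¬ G.HasTriangle) {p₁ p₂ : List G.E} {u v : G.V}
    (h₁ : G.IsPath p₁ u v) (h₂ : G.IsPath p₂ u v)
    (hlf₁ : ∀ e ∈ p₁, G.o e ≠ G.t e) (hlf₂ : ∀ e ∈ p₂, G.o e ≠ G.t e) :
    p₁.length = p₂.length := by
  by_cases huv : u = v
  · subst huv
    rw [hqa.eq_nil_of_isPath_self h₁ hlf₁, hqa.eq_nil_of_isPath_self h₂ hlf₂]
  have hpos : ∀ {p : List G.E}, G.IsPath p u v → 0 < p.length := fun hp =>
    List.length_pos_iff.2 fun hnil => huv (isPath_nil.1 (hnil ▸ hp))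
  have no_short_cut : ∀ {q₁ q₂ : List G.E}, G.IsPath q₁ u v → G.IsPath q₂ u v →
      (∀ e ∈ q₁, G.o e ≠ G.t e) → (∀ e ∈ q₂, G.o e ≠ G.t e) →
      q₁.length = 1 → q₂.length = 2 → False := by
    intro q₁ q₂ hq₁ hq₂ hlf₁ hlf₂ hl₁ hl₂
    obtain ⟨a, rfl⟩ := List.length_eq_one_iff.1 hl₁
    obtain ⟨b, c, rfl⟩ := List.length_eq_two.1 hl₂
    simp only [isPath_cons, isPath_nil] at hq₁ hq₂
    simp only [List.mem_cons, List.not_mem_nil, or_false, forall_eq_or_imp, forall_eq] at hlf₁ hlf₂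
    exact htr ⟨a, b, c, hq₁.1.trans hq₂.1.symm, hq₂.2.1.symm, hq₂.2.2.trans hq₁.2.symm,
      hlf₁, hlf₂.1, hlf₂.2⟩
  have hl₁ := hpb p₁ u v h₁ hlf₁
  have hl₂ := hpb p₂ u v h₂ hlf₂
  have hp₁ := hpos h₁
  have hp₂ := hpos h₂
  interval_cases h₁len : p₁.length <;> interval_cases h₂len : p₂.length
  · rfl
  · exact (no_short_cut h₁ h₂ hlf₁ hlf₂ h₁len h₂len).elim
  · exact (no_short_cut h₂ h₁ hlf₂ hlf₁ h₂len h₁len).elim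
  · rfl

variable (G) in
noncomputable def nonLoopLabel (e : G.E) : Multiplicative ℕ :=
  Multiplicative.ofAdd (if G.o e = G.t e then 0 else 1)

lemma labelProd_nonLoopLabel (p : List G.E) :
    G.labelProd G.nonLoopLabel p = Multiplicative.ofAdd (G.nonLoops p).length := by
  induction p with
  | nil => rfl
  | cons e q ih =>
    rw [labelProd, List.map_cons, List.prod_cons, ← labelProd, ih]
    by_cases he : G.o e = G.t e
    · simp [nonLoopLabel, nonLoops, he]
    · simp [nonLoopLabel, nonLoops, he, ← ofAdd_add, add_comm]

lemma isCommutative_nonLoopLabel (hqa : G.QuasiAcyclic) (hpb : G.TwoPathBounded)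
    (htr : ¬ G.HasTriangle) : G.IsCommutative G.nonLoopLabel := by
  intro u v p₁ p₂ h₁ h₂
  rw [labelProd_nonLoopLabel, labelProd_nonLoopLabel,
    length_eq_of_isPath_of_loopFree hqa hpb htr h₁.nonLoops h₂.nonLoops
      (fun _ => o_ne_t_of_mem_nonLoops) (fun _ => o_ne_t_of_mem_nonLoops)]

lemma nonLoops_eq_nil_iff {s : List G.E} : G.nonLoops s = [] ↔ ∀ e ∈ s, G.o e = G.t e := by
  simp [nonLoops, List.filter_eq_nil_iff]

lemma xor_allLoops_bothSidesNonLoop {r : List G.E × List G.E}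
    (hr : (G.nonLoops r.1).length = (G.nonLoops r.2).length) :
    Xor' (G.AllLoops r) (G.BothSidesNonLoop r) := by
  have hAll : G.AllLoops r ↔ G.nonLoops r.1 = [] ∧ G.nonLoops r.2 = [] := by
    simp only [AllLoops, nonLoops_eq_nil_iff]
  have hBoth : G.BothSidesNonLoop r ↔ G.nonLoops r.1 ≠ [] ∧ G.nonLoops r.2 ≠ [] := by
    simp only [BothSidesNonLoop, ne_eq, nonLoops_eq_nil_iff, not_forall, exists_prop]
  simp only [hAll, hBoth, ne_eq, ← List.length_eq_zero_iff, hr]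
  by_cases h : (G.nonLoops r.2).length = 0 <;> simp [Xor', h]

end OrientedGraph

theorem relations_split_general (G : OrientedGraph) (hqa : G.QuasiAcyclic)
    (hpb : G.TwoPathBounded) (htr : ¬ G.HasTriangle)
    (R : Finset (List G.E × List G.E)) (hR : G.IsComplete R) :
    ∀ r ∈ R, Xor' (G.AllLoops r) (G.BothSidesNonLoop r) := by
  intro r hr
  have hlabel := (hR _ G.nonLoopLabel).1 (G.isCommutative_nonLoopLabel hqa hpb htr) r hr
  rw [G.labelProd_nonLoopLabel, G.labelProd_nonLoopLabel] at hlabel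
  exact OrientedGraph.xor_allLoops_bothSidesNonLoop (Multiplicative.ofAdd.injective hlabel)

/-- Theorem: for a complete system of relations `R` of a quasi-acyclic, 2-path-bounded
graph without multiple edges and triangles, every relation lies in exactly one of
`R_L` (all edges are loops) and `R_N` (both sides contain a non-loop edge). -/
theorem relations_split (G : OrientedGraph) (hqa : G.QuasiAcyclic)
    (hpb : G.TwoPathBounded) (hme : ¬ G.HasMultipleEdges) (htr : ¬ G.HasTriangle)
    (R : Finset (List G.E × List G.E)) (hR : G.IsComplete R) :
    ∀ r ∈ R, Xor' (G.AllLoops r) (G.BothSidesNonLoop r) :=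
  relations_split_general G hqa hpb htr R hR
end
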